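/- Let M be the commutative monoid presented by generators X_{a,b} and the swap relations [v⃗_1, i, v⃗_2] + [w⃗_1, i, w⃗_2] = [v⃗_1, i, w⃗_2] + [w⃗_1, i, v⃗_2] (for all tuples sharing entry i at a common position). Then M is cancellative and isomorphic to the submonoid of ℕ^{X-coordinates} given by the fiber product P(a,b); in particular the binomial ideal generated by the swap relations is prime. -/

import Mathlib

/-!
Evaluation sends a tuple of `X_{a,b}` to its consecutive pairs, one in each slot. A swap at a
common entry only exchanges the tails of two tuples, so it leaves the multiset of pairs in every
slot unchanged: the swap congruence lies in the kernel of evaluation.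

Conversely, let `x` and `y` have the same evaluation and let `g` occur in `x`. Suppose `y` has
been transformed by swaps so that it contains a tuple `h` agreeing with `g` on the first slots.
In the next slot `y` contains some `h₂` with the same pair as `g`, and `h`, `h₂` share the entry
between the two slots; swapping them there produces a tuple agreeing with `g` one slot further.
Hence `y` is swap-equivalent to a sum containing `g`, and cancelling `g` gives an induction on
the number of tuples.

The image is the fiber product: in a nonzero element of it, the compatibility of consecutive
slots lets one follow a chain of pairs through all slots, which is a tuple of `X_{a,b}`;
subtracting its image lowers the degree.
-/

/-- The set `X_{a,b}` of tuples over `ℤ/mℤ`. -/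
def Xab (m a b : ℕ) : Set (Fin (a + b - 1) → ZMod m) :=
  {i | ∃ h0 : 0 < a + b - 1, ∃ hl : a + b - 2 < a + b - 1,
    i ⟨0, h0⟩ ∈ ({0, ((m - 1 : ℕ) : ZMod m)} : Set (ZMod m)) ∧
    i ⟨a + b - 2, hl⟩ ∈ ({0, ((m - 1 : ℕ) : ZMod m)} : Set (ZMod m)) ∧
    ∀ (k : ℕ) (hk : k + 1 < a + b - 1),
      (k < a - 1 → i ⟨k, by omega⟩ - i ⟨k + 1, hk⟩ ∈ ({0, 1} : Set (ZMod m))) ∧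
      (a - 1 ≤ k → i ⟨k, by omega⟩ - i ⟨k + 1, hk⟩ ∈ ({0, -1} : Set (ZMod m)))}

/-- Ambient product of the free K-Pieri monoids at the internal vertices. -/
abbrev BigM (m a b : ℕ) := Fin (a + b - 2) → ((ZMod m × ZMod m) →₀ ℕ)

/-- Validity of a generator label at slot `s` for the K-Pieri semigroups. -/
def validPair (m a b : ℕ) (s : ℕ) (p : ZMod m × ZMod m) : Prop :=
  (s < a - 1 → p.1 - p.2 ∈ ({0, 1} : Set (ZMod m))) ∧
  (a - 1 ≤ s → p.1 - p.2 ∈ ({0, -1} : Set (ZMod m))) ∧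
  (s = 0 → p.1 ∈ ({0, ((m - 1 : ℕ) : ZMod m)} : Set (ZMod m))) ∧
  (s = a + b - 3 → p.2 ∈ ({0, ((m - 1 : ℕ) : ZMod m)} : Set (ZMod m)))

/-- Embedding a tuple of `X_{a,b}` into the product of the free K-Pieri monoids. -/
noncomputable def embP (m a b : ℕ) (i : Fin (a + b - 1) → ZMod m) : BigM m a b :=
  fun s => match s with
  | ⟨sv, hs⟩ => Finsupp.single (i ⟨sv, by omega⟩, i ⟨sv + 1, by omega⟩) 1

/-- The generators of the presented monoid: elements of `X_{a,b}`. -/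
def XType (m a b : ℕ) := {i : Fin (a + b - 1) → ZMod m // i ∈ Xab m a b}

/-- The swap relations on the free commutative monoid on `X_{a,b}`:
`[v⃗₁, i, v⃗₂] + [w⃗₁, i, w⃗₂] = [v⃗₁, i, w⃗₂] + [w⃗₁, i, v⃗₂]` for tuples sharing the
entry `i` at a common position. -/
noncomputable def swapRel (m a b : ℕ) :
    (XType m a b →₀ ℕ) → (XType m a b →₀ ℕ) → Prop :=
  fun x y => ∃ (g h g' h' : XType m a b) (k : Fin (a + b - 1)),
    g.val k = h.val k ∧
    (∀ j, g'.val j = if j ≤ k then g.val j else h.val j) ∧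
    (∀ j, h'.val j = if j ≤ k then h.val j else g.val j) ∧
    x = Finsupp.single g 1 + Finsupp.single h 1 ∧
    y = Finsupp.single g' 1 + Finsupp.single h' 1

/-- Evaluation of formal sums of generators in the fiber product. -/
noncomputable def evalHom (m a b : ℕ) : (XType m a b →₀ ℕ) →+ BigM m a b :=
  Finsupp.liftAddHom (fun g => (multiplesHom (BigM m a b)) (embP m a b g.val))

namespace Finsupp

variable {α : Type*}

theorem induction_single_one {motive : (α →₀ ℕ) → Prop} (zero : motive 0)
    (add : ∀ g x, motive x → motive (single g 1 + x)) (x : α →₀ ℕ) : motive x := by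
  induction x using Finsupp.induction with
  | zero => exact zero
  | single_add g n x _ _ hx =>
    suffices ∀ n, motive (single g n + x) from this n
    intro n
    induction n with
    | zero => simpa using hx
    | succ n ih => rw [add_comm n 1, single_add, add_assoc]; exact add g _ ih

theorem exists_eq_single_one_add {x : α →₀ ℕ} {g : α} (hg : g ∈ x.support) :
    ∃ z, x = single g 1 + z :=
  le_iff_exists_add.mp (single_le_iff.mpr (Nat.one_le_iff_ne_zero.mpr (mem_support_iff.mp hg)))

end Finsupp

namespace KPieri

open Finsupp

variable {α : Type*} {m a b : ℕ}

def splice {N : ℕ} (g h : Fin N → α) (k : Fin N) : Fin N → α :=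
  fun j => if j ≤ k then g j else h j

@[simp]
theorem splice_self {N : ℕ} (g : Fin N → α) (k : Fin N) : splice g g k = g := by
  funext j; simp [splice]

def pairAt (s : Fin (a + b - 2)) (i : Fin (a + b - 1) → α) : α × α :=
  (i ⟨s, by omega⟩, i ⟨s + 1, by omega⟩)

theorem pairAt_splice_of_lt {g h : Fin (a + b - 1) → α} {k : Fin (a + b - 1)}
    {s : Fin (a + b - 2)} (hs : s.val < k.val) : pairAt s (splice g h k) = pairAt s g := by
  simp only [pairAt, splice, Fin.le_def]
  rw [if_pos hs.le, if_pos (show s.val + 1 ≤ k.val from hs)]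

theorem pairAt_splice_of_le {g h : Fin (a + b - 1) → α} {k : Fin (a + b - 1)}
    {s : Fin (a + b - 2)} (hs : k.val ≤ s.val) (hk : g k = h k) :
    pairAt s (splice g h k) = pairAt s h := by
  simp only [pairAt, splice, Fin.le_def]
  rw [if_neg (by omega : ¬ s.val + 1 ≤ k.val)]
  split_ifs
  · have := s.isLt
    rw [show (⟨s, by omega⟩ : Fin (a + b - 1)) = k from Fin.ext (by simp only; omega), hk]
  · rfl

theorem single_pairAt_splice_add (g h : Fin (a + b - 1) → α) {k : Fin (a + b - 1)}
    (hk : g k = h k) (s : Fin (a + b - 2)) :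
    single (pairAt s (splice g h k)) 1 + single (pairAt s (splice h g k)) 1 =
      single (pairAt s g) 1 + single (pairAt s h) 1 := by
  rcases lt_or_ge s.val k.val with hs | hs
  · rw [pairAt_splice_of_lt hs, pairAt_splice_of_lt hs]
  · rw [pairAt_splice_of_le hs hk, pairAt_splice_of_le hs hk.symm, add_comm]

theorem eq_of_pairAt_eq (hab : 3 ≤ a + b) {g h : Fin (a + b - 1) → α}
    (H : ∀ s, pairAt s g = pairAt s h) : g = h := by
  funext ⟨j, hj⟩
  rcases lt_or_ge j (a + b - 2) with hj' | hj'
  · exact congrArg Prod.fst (H ⟨j, hj'⟩)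
  · obtain rfl : j = a + b - 3 + 1 := by omega
    exact congrArg Prod.snd (H ⟨a + b - 3, by omega⟩)

theorem validPair_pairAt {i : Fin (a + b - 1) → ZMod m} (hi : i ∈ Xab m a b)
    (s : Fin (a + b - 2)) : validPair m a b s (pairAt s i) := by
  obtain ⟨h0, hl, hi0, hil, hdiff⟩ := hi
  obtain ⟨s, hs⟩ := s
  refine ⟨(hdiff s (by omega)).1, (hdiff s (by omega)).2, ?_, ?_⟩
  · rintro rfl
    exact hi0
  · intro hsl
    change s = a + b - 3 at hsl
    change i ⟨s + 1, _⟩ ∈ _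
    rwa [show (⟨s + 1, _⟩ : Fin (a + b - 1)) = ⟨a + b - 2, hl⟩ from
      Fin.ext (by simp only; omega)]

theorem mem_Xab_of_validPair (hab : 3 ≤ a + b) {i : Fin (a + b - 1) → ZMod m}
    (H : ∀ s : Fin (a + b - 2), validPair m a b s (pairAt s i)) : i ∈ Xab m a b := by
  refine ⟨by omega, by omega, (H ⟨0, by omega⟩).2.2.1 rfl, ?_, fun k hk => ?_⟩
  · have hlast := (H ⟨a + b - 3, by omega⟩).2.2.2 rfl
    change i ⟨a + b - 3 + 1, _⟩ ∈ _ at hlast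
    rwa [show (⟨a + b - 3 + 1, _⟩ : Fin (a + b - 1)) = ⟨a + b - 2, by omega⟩ from
      Fin.ext (by simp only; omega)] at hlast
  · exact ⟨(H ⟨k, by omega⟩).1, (H ⟨k, by omega⟩).2.1⟩

theorem splice_mem_Xab (hab : 3 ≤ a + b) {g h : Fin (a + b - 1) → ZMod m}
    (hg : g ∈ Xab m a b) (hh : h ∈ Xab m a b) {k : Fin (a + b - 1)} (hk : g k = h k) :
    splice g h k ∈ Xab m a b := by
  refine mem_Xab_of_validPair hab fun s => ?_
  rcases lt_or_ge s.val k.val with hs | hs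
  · rw [pairAt_splice_of_lt hs]; exact validPair_pairAt hg s
  · rw [pairAt_splice_of_le hs hk]; exact validPair_pairAt hh s

def _root_.XType.splice (hab : 3 ≤ a + b) (g h : XType m a b) (k : Fin (a + b - 1))
    (hk : g.val k = h.val k) : XType m a b :=
  ⟨KPieri.splice g.val h.val k, splice_mem_Xab hab g.2 h.2 hk⟩

theorem embP_apply (i : Fin (a + b - 1) → ZMod m) (s : Fin (a + b - 2)) :
    embP m a b i s = single (pairAt s i) 1 := rfl

theorem evalHom_single_one (g : XType m a b) :
    evalHom m a b (single g 1) = embP m a b g.val := by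
  simp [evalHom]

theorem evalHom_apply (x : XType m a b →₀ ℕ) (s : Fin (a + b - 2)) :
    evalHom m a b x s = x.mapDomain fun g => pairAt s g.val := by
  induction x using induction_single_one with
  | zero => simp
  | add g x ih =>
    rw [map_add, Pi.add_apply, ih, mapDomain_add, mapDomain_single, evalHom_single_one,
      embP_apply]

theorem swapRel_le_ker : addConGen (swapRel m a b) ≤ AddCon.ker (evalHom m a b) := by
  rw [AddCon.addConGen_le]
  rintro _ _ ⟨g, h, g', h', k, hk, hg', hh', rfl, rfl⟩
  have hg'v : g'.val = splice g.val h.val k := funext hg'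
  have hh'v : h'.val = splice h.val g.val k := funext hh'
  rw [AddCon.ker_rel]
  funext s
  simp only [map_add, evalHom_single_one, Pi.add_apply, embP_apply, hg'v, hh'v]
  exact (single_pairAt_splice_add _ _ hk s).symm

theorem eq_zero_of_evalHom_eq_zero (hab : 3 ≤ a + b) {x : XType m a b →₀ ℕ}
    (hx : evalHom m a b x = 0) : x = 0 := by
  have h0 := congrFun hx ⟨0, by omega⟩
  rwa [evalHom_apply, Pi.zero_apply,
    mapDomain_apply_eq_zero_iff_of_subsingletonAddUnits] at h0

theorem exists_mem_support_pairAt_eq {x y : XType m a b →₀ ℕ}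
    (heq : evalHom m a b x = evalHom m a b y) {g : XType m a b} (hg : g ∈ x.support)
    (s : Fin (a + b - 2)) : ∃ h ∈ y.support, pairAt s h.val = pairAt s g.val := by
  classical
  have hmem : pairAt s g.val ∈ (evalHom m a b y s).support := by
    rw [← heq, evalHom_apply, mapDomain_support_of_subsingletonAddUnits]
    exact Finset.mem_image_of_mem _ hg
  rw [evalHom_apply, mapDomain_support_of_subsingletonAddUnits] at hmem
  exact Finset.mem_image.mp hmem

theorem exists_rel_splice_mem_support (hab : 3 ≤ a + b) {y : XType m a b →₀ ℕ}
    {g h : XType m a b} (hg : g ∈ y.support) (hh : h ∈ y.support) {k : Fin (a + b - 1)}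
    (hk : g.val k = h.val k) :
    ∃ y', addConGen (swapRel m a b) y y' ∧ g.splice hab h k hk ∈ y'.support := by
  by_cases hgh : g = h
  · subst hgh
    refine ⟨y, AddCon.refl _ y, ?_⟩
    rwa [show g.splice hab g k hk = g from Subtype.ext (splice_self _ _)]
  obtain ⟨z₁, rfl⟩ := exists_eq_single_one_add hg
  have hh₁ : h ∈ z₁.support := by simpa [single_apply, hgh] using hh
  obtain ⟨z, rfl⟩ := exists_eq_single_one_add hh₁
  refine ⟨single (g.splice hab h k hk) 1 + single (h.splice hab g k hk.symm) 1 + z, ?_,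
    by simp⟩
  rw [← add_assoc]
  exact AddCon.add _
    (AddConGen.Rel.of _ _ ⟨g, h, _, _, k, hk, fun _ => rfl, fun _ => rfl, rfl, rfl⟩)
    (AddCon.refl _ z)

theorem exists_rel_pairAt_eq_of_le (hab : 3 ≤ a + b) {x y : XType m a b →₀ ℕ}
    (heq : evalHom m a b x = evalHom m a b y) {g : XType m a b} (hg : g ∈ x.support)
    (t : ℕ) (ht : t < a + b - 2) :
    ∃ y', addConGen (swapRel m a b) y y' ∧
      ∃ h ∈ y'.support, ∀ s : Fin (a + b - 2), s.val ≤ t →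
        pairAt s h.val = pairAt s g.val := by
  induction t with
  | zero =>
    obtain ⟨h, hh, he⟩ := exists_mem_support_pairAt_eq heq hg ⟨0, ht⟩
    refine ⟨y, AddCon.refl _ y, h, hh, fun s hs => ?_⟩
    obtain rfl : s = ⟨0, ht⟩ := Fin.ext (Nat.le_zero.mp hs)
    exact he
  | succ t ih =>
    obtain ⟨y', hyy', h, hh, hagree⟩ := ih (by omega)
    obtain ⟨h₂, hh₂, he₂⟩ :=
      exists_mem_support_pairAt_eq (heq.trans (swapRel_le_ker hyy')) hg ⟨t + 1, ht⟩
    have hk : h.val ⟨t + 1, by omega⟩ = h₂.val ⟨t + 1, by omega⟩ :=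
      (congrArg Prod.snd (hagree ⟨t, by omega⟩ le_rfl)).trans (congrArg Prod.fst he₂).symm
    obtain ⟨y'', hy'y'', hmem⟩ := exists_rel_splice_mem_support hab hh hh₂ hk
    refine ⟨y'', AddCon.trans _ hyy' hy'y'', _, hmem, fun s hs => ?_⟩
    rcases Nat.lt_or_eq_of_le hs with hs | hs
    · rw [XType.splice, pairAt_splice_of_lt hs]
      exact hagree s (by omega)
    · obtain rfl : s = ⟨t + 1, ht⟩ := Fin.ext hs
      rw [XType.splice, pairAt_splice_of_le le_rfl hk, he₂]

theorem exists_rel_mem_support (hab : 3 ≤ a + b) {x y : XType m a b →₀ ℕ}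
    (heq : evalHom m a b x = evalHom m a b y) {g : XType m a b} (hg : g ∈ x.support) :
    ∃ y', addConGen (swapRel m a b) y y' ∧ g ∈ y'.support := by
  obtain ⟨y', hyy', h, hh, hagree⟩ :=
    exists_rel_pairAt_eq_of_le hab heq hg (a + b - 3) (by omega)
  obtain rfl : h = g := Subtype.ext (eq_of_pairAt_eq hab fun s => hagree s (by omega))
  exact ⟨y', hyy', hh⟩

theorem ker_le_addConGen (hab : 3 ≤ a + b) :
    AddCon.ker (evalHom m a b) ≤ addConGen (swapRel m a b) := by
  intro x y hxy
  induction x using induction_single_one generalizing y with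
  | zero =>
    obtain rfl := eq_zero_of_evalHom_eq_zero hab ((AddCon.ker_rel _).mp hxy).symm
    exact AddCon.refl _ 0
  | add g x ih =>
    obtain ⟨y', hyy', hg⟩ :=
      exists_rel_mem_support hab hxy (by simp : g ∈ (single g 1 + x).support)
    obtain ⟨z, rfl⟩ := exists_eq_single_one_add hg
    have hxz : evalHom m a b x = evalHom m a b z := by
      have := hxy.trans (swapRel_le_ker hyy')
      rw [map_add, map_add] at this
      exact add_left_cancel this
    exact AddCon.trans _ (AddCon.add _ (AddCon.refl _ _) (ih hxz)) (AddCon.symm _ hyy')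

def fiberProduct (m a b : ℕ) : Set (BigM m a b) :=
  {x | (∀ s : Fin (a + b - 2), ∀ p ∈ (x s).support, validPair m a b s p) ∧
    ∀ (s : ℕ) (hs : s + 1 < a + b - 2),
      mapDomain Prod.snd (x ⟨s, Nat.lt_of_succ_lt hs⟩) = mapDomain Prod.fst (x ⟨s + 1, hs⟩)}

theorem evalHom_mem_fiberProduct (x : XType m a b →₀ ℕ) :
    evalHom m a b x ∈ fiberProduct m a b := by
  classical
  refine ⟨fun s p hp => ?_, fun s hs => ?_⟩
  · rw [evalHom_apply, mapDomain_support_of_subsingletonAddUnits] at hp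
    obtain ⟨g, -, rfl⟩ := Finset.mem_image.mp hp
    exact validPair_pairAt g.2 s
  · rw [evalHom_apply, evalHom_apply, ← mapDomain_comp, ← mapDomain_comp]
    rfl

theorem mem_fiberProduct_of_add_mem {x y : BigM m a b} (hyx : y + x ∈ fiberProduct m a b)
    (hy : y ∈ fiberProduct m a b) : x ∈ fiberProduct m a b := by
  refine ⟨fun s p hp => hyx.1 s p ?_, fun s hs => ?_⟩
  · rw [mem_support_iff] at hp ⊢
    simp only [Pi.add_apply, Finsupp.add_apply]
    omega
  · have h := hyx.2 s hs
    simp only [Pi.add_apply, mapDomain_add, hy.2 s hs] at h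
    exact add_left_cancel h

theorem eq_zero_of_mem_fiberProduct (hab : 3 ≤ a + b) {x : BigM m a b}
    (hx : x ∈ fiberProduct m a b) (hx0 : x ⟨0, by omega⟩ = 0) : x = 0 := by
  suffices ∀ s (hs : s < a + b - 2), x ⟨s, hs⟩ = 0 from funext fun s => this s s.isLt
  intro s hs
  induction s with
  | zero => exact hx0
  | succ s ih =>
    have h := hx.2 s hs
    rwa [ih (by omega), mapDomain_zero, eq_comm,
      mapDomain_apply_eq_zero_iff_of_subsingletonAddUnits] at h

theorem exists_pairAt_mem_support (hab : 3 ≤ a + b) {x : BigM m a b}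
    (hx : x ∈ fiberProduct m a b) {p : ZMod m × ZMod m}
    (hp : p ∈ (x ⟨0, by omega⟩).support) :
    ∃ c : Fin (a + b - 1) → ZMod m, ∀ s, pairAt s c ∈ (x s).support := by
  classical
  suffices ∀ t (ht : t < a + b - 2), ∃ c : Fin (a + b - 1) → ZMod m,
      ∀ s : Fin (a + b - 2), s.val ≤ t → pairAt s c ∈ (x s).support by
    obtain ⟨c, hc⟩ := this (a + b - 3) (by omega)
    exact ⟨c, fun s => hc s (by omega)⟩
  intro t ht
  induction t with
  | zero =>
    refine ⟨fun j => if j.val = 0 then p.1 else p.2, fun s hs => ?_⟩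
    obtain rfl : s = ⟨0, ht⟩ := Fin.ext (Nat.le_zero.mp hs)
    simpa [pairAt] using hp
  | succ t ih =>
    obtain ⟨c, hc⟩ := ih (by omega)
    have hq : c ⟨t + 1, by omega⟩ ∈ (mapDomain Prod.fst (x ⟨t + 1, ht⟩)).support := by
      rw [← hx.2 t ht, mapDomain_support_of_subsingletonAddUnits]
      exact Finset.mem_image_of_mem Prod.snd (hc ⟨t, by omega⟩ le_rfl)
    rw [mapDomain_support_of_subsingletonAddUnits] at hq
    obtain ⟨q, hq, hq₁⟩ := Finset.mem_image.mp hq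
    refine ⟨Function.update c ⟨t + 2, by omega⟩ q.2, fun s hs => ?_⟩
    rcases Nat.lt_or_eq_of_le hs with hs | hs
    · convert hc s (by omega) using 1
      simp only [pairAt, Function.update_apply, Fin.ext_iff]
      rw [if_neg (by omega), if_neg (by omega)]
    · obtain rfl : s = ⟨t + 1, ht⟩ := Fin.ext hs
      convert hq using 1
      simp [pairAt, Fin.ext_iff, ← hq₁]

theorem exists_embP_le (hab : 3 ≤ a + b) {x : BigM m a b} (hx : x ∈ fiberProduct m a b)
    (hx0 : x ⟨0, by omega⟩ ≠ 0) : ∃ g : XType m a b, embP m a b g.val ≤ x := by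
  obtain ⟨p, hp⟩ := Finsupp.support_nonempty_iff.mpr hx0
  obtain ⟨c, hc⟩ := exists_pairAt_mem_support hab hx hp
  refine ⟨⟨c, mem_Xab_of_validPair hab fun s => hx.1 s _ (hc s)⟩, fun s => ?_⟩
  rw [embP_apply, single_le_iff]
  exact Nat.one_le_iff_ne_zero.mpr (mem_support_iff.mp (hc s))

theorem mem_mrange_evalHom (hab : 3 ≤ a + b) {x : BigM m a b} (hx : x ∈ fiberProduct m a b) :
    x ∈ AddMonoidHom.mrange (evalHom m a b) := by
  induction hn : (x ⟨0, by omega⟩).degree generalizing x with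
  | zero =>
    rw [eq_zero_of_mem_fiberProduct hab hx ((degree_eq_zero_iff _).mp hn)]
    exact zero_mem _
  | succ n ih =>
    obtain ⟨g, hg⟩ := exists_embP_le hab hx (by rintro h; simp [h] at hn)
    obtain ⟨x', rfl⟩ := le_iff_exists_add.mp hg
    have hemb := evalHom_single_one g
    have hx' := mem_fiberProduct_of_add_mem hx (hemb ▸ evalHom_mem_fiberProduct _)
    rw [Pi.add_apply, map_add, embP_apply, degree_single] at hn
    exact add_mem ⟨single g 1, hemb⟩ (ih hx' (by omega))

theorem coe_mrange_evalHom (hab : 3 ≤ a + b) :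
    (AddMonoidHom.mrange (evalHom m a b) : Set (BigM m a b)) = fiberProduct m a b :=
  Set.ext fun _ =>
    ⟨by rintro ⟨w, rfl⟩; exact evalHom_mem_fiberProduct w, mem_mrange_evalHom hab⟩

end KPieri

/-- The commutative monoid `M` presented by generators `X_{a,b}` and
the swap relations is cancellative and isomorphic to the fiber product submonoid
`P(a,b)`: the congruence generated by the swap relations is exactly the kernel
congruence of the evaluation map onto `P(a,b)` (so the binomial ideal generated by the
swap relations is the full toric ideal, hence prime). -/
theorem presented_monoid_is_Pab (m a b : ℕ) (ha : 2 ≤ a) (hb : 2 ≤ b)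
    (Pab : AddSubmonoid (BigM m a b))
    (hPab : (Pab : Set (BigM m a b)) =
      {x | (∀ s : Fin (a + b - 2), ∀ p ∈ (x s).support, validPair m a b s p) ∧
        ∀ (s : ℕ) (hs : s + 1 < a + b - 2),
          Finsupp.mapDomain Prod.snd (x ⟨s, by omega⟩)
            = Finsupp.mapDomain Prod.fst (x ⟨s + 1, hs⟩)}) :
    addConGen (swapRel m a b) = AddCon.ker (evalHom m a b) ∧
    (∀ x y z : (addConGen (swapRel m a b)).Quotient, x + y = x + z → y = z) ∧
    Nonempty ((addConGen (swapRel m a b)).Quotient ≃+ Pab) := by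
  have hab : 3 ≤ a + b := by omega
  have hker : addConGen (swapRel m a b) = AddCon.ker (evalHom m a b) :=
    le_antisymm KPieri.swapRel_le_ker (KPieri.ker_le_addConGen hab)
  have hrange : AddMonoidHom.mrange (evalHom m a b) = Pab :=
    SetLike.coe_injective ((KPieri.coe_mrange_evalHom hab).trans hPab.symm)
  refine ⟨hker, ?_, ?_⟩
  · rw [hker]
    intro x y z h
    apply AddCon.kerLift_injective (evalHom m a b)
    simpa only [map_add, add_right_inj] using congrArg (AddCon.kerLift (evalHom m a b)) h
  · rw [hker, ← hrange]
    exact ⟨AddCon.quotientKerEquivRange _⟩
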